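/- arXiv:2112.02636 — 2 statements merged into one kernel-verified Lean document; each statement's English description precedes it below -/
import Mathlib

section
/- With the notation of Gaussian process regression, sup over all y in the RKHS with ‖y‖_{H_k} = 1 of |y(x) − ȳ(x)|, where ȳ(x) = k(x,X) K(X,X)⁻¹ Y with Y = (y(x₁),…,y(x_N)), equals σ̄(x) = (k(x,x) − k(x,X)K(X,X)⁻¹k(X,x))^{1/2}. -/
open scoped RealInnerProductSpace
open Matrix

/-!
With `Φ x = k(x, ·)`, the error functional `y ↦ y(x) - ȳ(x)` is `y ↦ ⟪y, z⟫`, where `z` is `Φ x`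
minus its orthogonal projection onto the span of the `Φ xᵢ`. Its supremum over the unit sphere is
`‖z‖`, and since `z` is orthogonal to every `Φ xᵢ`, `‖z‖² = ⟪Φ x, z⟫ = σ̄(x)²`.
-/

section
variable {H : Type*} [NormedAddCommGroup H] [InnerProductSpace ℝ H]

theorem sSup_abs_inner_of_norm_eq_one (z : H) :
    sSup {r : ℝ | ∃ y : H, ‖y‖ = 1 ∧ r = |⟪y, z⟫|} = ‖z‖ := by
  rcases eq_or_ne z 0 with rfl | hz
  · simp only [inner_zero_right, abs_zero, norm_zero]
    exact le_antisymm (Real.sSup_nonpos fun _ ⟨_, _, hr⟩ => hr.le)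
      (Real.sSup_nonneg fun _ ⟨_, _, hr⟩ => hr.ge)
  refine IsGreatest.csSup_eq ⟨⟨‖z‖⁻¹ • z, norm_smul_inv_norm hz, ?_⟩, ?_⟩
  · rw [real_inner_smul_left, real_inner_self_eq_norm_sq, abs_of_nonneg (by positivity)]
    field_simp
  · rintro r ⟨y, hy, rfl⟩
    simpa [hy] using abs_real_inner_le_norm y z

variable {ι : Type*} [Fintype ι] [DecidableEq ι]

omit [DecidableEq ι] in
theorem inner_sum_smul_eq_gram_mulVec (v : ι → H) (c : ι → ℝ) (j : ι) :
    ⟪v j, ∑ i, c i • v i⟫ = (gram ℝ v *ᵥ c) j := by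
  simp [inner_sum, real_inner_smul_right, mulVec, dotProduct, gram_apply, mul_comm]

theorem transpose_inv_gram (v : ι → H) : (gram ℝ v)⁻¹ᵀ = (gram ℝ v)⁻¹ := by
  rw [← conjTranspose_eq_transpose_of_trivial, ((isHermitian_gram ℝ v).inv).eq]

/-- For invertible `gram ℝ v`, this is `p` minus its orthogonal projection onto the span of `v`. -/
noncomputable def gramResidual (v : ι → H) (p : H) : H :=
  p - ∑ i, ((gram ℝ v)⁻¹ *ᵥ fun j => ⟪v j, p⟫) i • v i

theorem inner_gramResidual (v : ι → H) (p y : H) :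
    ⟪y, gramResidual v p⟫
      = ⟪y, p⟫ - (fun i => ⟪p, v i⟫) ⬝ᵥ ((gram ℝ v)⁻¹ *ᵥ fun i => ⟪y, v i⟫) := by
  have hsymm : (fun i => ⟪p, v i⟫) ᵥ* (gram ℝ v)⁻¹ = (gram ℝ v)⁻¹ *ᵥ fun j => ⟪v j, p⟫ := by
    simp_rw [← mulVec_transpose, transpose_inv_gram, real_inner_comm p]
  rw [dotProduct_mulVec, hsymm, gramResidual, inner_sub_right, inner_sum]
  simp [real_inner_smul_right, dotProduct]

theorem gramResidual_inner_eq_zero (v : ι → H) (p : H) (hv : IsUnit (gram ℝ v).det) (j : ι) :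
    ⟪gramResidual v p, v j⟫ = 0 := by
  rw [real_inner_comm, gramResidual, inner_sub_right, inner_sum_smul_eq_gram_mulVec, mulVec_mulVec,
    mul_nonsing_inv _ hv, one_mulVec, sub_self]

theorem norm_gramResidual_sq (v : ι → H) (p : H) (hv : IsUnit (gram ℝ v).det) :
    ‖gramResidual v p‖ ^ 2
      = ⟪p, p⟫ - (fun i => ⟪p, v i⟫) ⬝ᵥ ((gram ℝ v)⁻¹ *ᵥ fun i => ⟪v i, p⟫) := by
  have horth : ⟪gramResidual v p, gramResidual v p⟫ = ⟪gramResidual v p, p⟫ := by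
    nth_rw 2 [gramResidual]
    simp [inner_sub_right, inner_sum, real_inner_smul_right, gramResidual_inner_eq_zero v p hv]
  rw [← real_inner_self_eq_norm_sq, horth, real_inner_comm, inner_gramResidual]
  simp_rw [real_inner_comm p]
end

theorem gpr_sup_unit_sphere_error_eq_std_general
    {n N : ℕ} {H : Type*} [NormedAddCommGroup H] [InnerProductSpace ℝ H]
    (k : EuclideanSpace ℝ (Fin n) → EuclideanSpace ℝ (Fin n) → ℝ)
    (Φ : EuclideanSpace ℝ (Fin n) → H)
    (hk : ∀ x x', k x x' = ⟪Φ x, Φ x'⟫)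
    (X : Fin N → EuclideanSpace ℝ (Fin n))
    (Kmat : Matrix (Fin N) (Fin N) ℝ) (hK : Kmat = Matrix.of fun i j => k (X i) (X j))
    (hKinv : IsUnit Kmat.det)
    (x : EuclideanSpace ℝ (Fin n)) :
    sSup {r : ℝ | ∃ y : H, ‖y‖ = 1 ∧
        r = |⟪y, Φ x⟫ - (fun i => k x (X i)) ⬝ᵥ (Kmat⁻¹ *ᵥ fun i => ⟪y, Φ (X i)⟫)|}
      = Real.sqrt (k x x - (fun i => k x (X i)) ⬝ᵥ (Kmat⁻¹ *ᵥ fun i => k (X i) x)) := by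
  obtain rfl : k = fun a b => ⟪Φ a, Φ b⟫ := funext₂ hk
  obtain rfl : Kmat = gram ℝ (Φ ∘ X) := hK
  have herror (y : H) : ⟪y, Φ x⟫ - (fun i => ⟪Φ x, Φ (X i)⟫) ⬝ᵥ
      ((gram ℝ (Φ ∘ X))⁻¹ *ᵥ fun i => ⟪y, Φ (X i)⟫) = ⟪y, gramResidual (Φ ∘ X) (Φ x)⟫ :=
    (inner_gramResidual _ _ y).symm
  simp only [herror, sSup_abs_inner_of_norm_eq_one]
  rw [← Real.sqrt_sq (norm_nonneg _), norm_gramResidual_sq _ _ hKinv]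
  rfl

/-- Stuart–Teckentrup: the worst-case error of the GPR predictive mean over the
unit sphere of the RKHS equals the predictive standard deviation:
`sup_{‖y‖=1} |y(x) − k(x,X)K(X,X)⁻¹Y| = σ̄(x)`, where `Y = (y(x₁),…,y(x_N))`.
The RKHS is modeled by a Hilbert space `H` with feature map `Φ` (`Φ x = k(x,·)`),
so that `y(x) = ⟪y, Φ x⟫` by the reproducing property. -/
theorem gpr_sup_unit_sphere_error_eq_std
    {n N : ℕ} {H : Type*} [NormedAddCommGroup H] [InnerProductSpace ℝ H]
    [CompleteSpace H] [Nontrivial H]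
    (k : EuclideanSpace ℝ (Fin n) → EuclideanSpace ℝ (Fin n) → ℝ)
    (Φ : EuclideanSpace ℝ (Fin n) → H)
    (hk : ∀ x x', k x x' = ⟪Φ x, Φ x'⟫)
    (X : Fin N → EuclideanSpace ℝ (Fin n)) (hX : Function.Injective X)
    (Kmat : Matrix (Fin N) (Fin N) ℝ) (hK : Kmat = Matrix.of fun i j => k (X i) (X j))
    (hKinv : IsUnit Kmat.det)
    (x : EuclideanSpace ℝ (Fin n)) :
    sSup {r : ℝ | ∃ y : H, ‖y‖ = 1 ∧
        r = |⟪y, Φ x⟫ - (fun i => k x (X i)) ⬝ᵥ (Kmat⁻¹ *ᵥ fun i => ⟪y, Φ (X i)⟫)|}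
      = Real.sqrt (k x x - (fun i => k x (X i)) ⬝ᵥ (Kmat⁻¹ *ᵥ fun i => k (X i) x)) :=
  gpr_sup_unit_sphere_error_eq_std_general k Φ hk X Kmat hK hKinv x
end

section
/- Augmenting the dataset with the point (h, ȳ(h)), where ȳ is the current GPR predictive mean, leaves the predictive mean unchanged: the GPR predictive mean built from data {(xᵢ, y(xᵢ))} ∪ {(h, ȳ(h))} equals ȳ(x) for all x. -/
open Matrix

/-!
Write `α = K⁻¹ Y` for the weights of the original predictor. Padding `α` with a zero weight on `h`
solves the augmented system: the first `N` rows of `K' (α, 0)` reproduce `K α = Y`, and the last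
row is `k(h, X) α = ȳ(h)`, the pseudo-output. Hence `K'⁻¹ Y' = (α, 0)`, and the zero weight makes
the new point invisible in `ȳ'(x) = k(x, X') (α, 0) = k(x, X) α`.
-/

namespace Matrix

variable {R : Type*} [CommRing R] {N : ℕ}

theorem dotProduct_snoc_zero (w : Fin (N + 1) → R) (v : Fin N → R) :
    w ⬝ᵥ Fin.snoc v 0 = (w ∘ Fin.castSucc) ⬝ᵥ v := by
  simp [dotProduct, Fin.sum_univ_castSucc]

theorem of_snoc_mulVec_snoc_zero {α : Type*} (k : α → α → R) (X : Fin N → α) (h : α)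
    (v : Fin N → R) :
    (of fun i j => k (Fin.snoc (α := fun _ => α) X h i) (Fin.snoc (α := fun _ => α) X h j)) *ᵥ
        Fin.snoc v 0 =
      Fin.snoc ((of fun i j => k (X i) (X j)) *ᵥ v) ((fun j => k h (X j)) ⬝ᵥ v) := by
  funext i
  refine Fin.lastCases ?_ (fun i => ?_) i <;>
    simp [mulVec, dotProduct_snoc_zero, Function.comp_def]

end Matrix

theorem gpr_mean_unchanged_by_pseudo_point_general
    {n N : ℕ}
    (k : EuclideanSpace ℝ (Fin n) → EuclideanSpace ℝ (Fin n) → ℝ)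
    (X : Fin N → EuclideanSpace ℝ (Fin n)) (Y : Fin N → ℝ)
    (h : EuclideanSpace ℝ (Fin n))
    (X' : Fin (N + 1) → EuclideanSpace ℝ (Fin n)) (hX' : X' = Fin.snoc X h)
    (Kmat : Matrix (Fin N) (Fin N) ℝ) (hK : Kmat = Matrix.of fun i j => k (X i) (X j))
    (hKinv : IsUnit Kmat.det)
    (Kmat' : Matrix (Fin (N + 1)) (Fin (N + 1)) ℝ)
    (hK' : Kmat' = Matrix.of fun i j => k (X' i) (X' j))
    (hKinv' : IsUnit Kmat'.det)
    (ybar : EuclideanSpace ℝ (Fin n) → ℝ)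
    (hybar : ∀ x, ybar x = (fun i => k x (X i)) ⬝ᵥ (Kmat⁻¹ *ᵥ Y))
    (Y' : Fin (N + 1) → ℝ) (hY' : Y' = Fin.snoc Y (ybar h))
    (ybar' : EuclideanSpace ℝ (Fin n) → ℝ)
    (hybar' : ∀ x, ybar' x = (fun i => k x (X' i)) ⬝ᵥ (Kmat'⁻¹ *ᵥ Y')) :
    ∀ x, ybar' x = ybar x := by
  intro x
  subst hX'
  have : Invertible Kmat' := invertibleOfIsUnitDet _ hKinv'
  have hpadded : Y' = Kmat' *ᵥ Fin.snoc (Kmat⁻¹ *ᵥ Y) 0 := by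
    rw [hK', of_snoc_mulVec_snoc_zero, ← hK, mulVec_mulVec, mul_nonsing_inv _ hKinv, one_mulVec,
      hY', hybar h]
  rw [hybar', inv_mulVec_eq_vec hpadded, dotProduct_snoc_zero, hybar]
  simp only [Function.comp_def, Fin.snoc_castSucc]

/-- Augmenting the dataset with `(h, ȳ(h))`, where `ȳ` is the current GPR
predictive mean, leaves the predictive mean unchanged: the mean built from
`{(xᵢ, yᵢ)} ∪ {(h, ȳ(h))}` equals `ȳ(x)` for all `x`. -/
theorem gpr_mean_unchanged_by_pseudo_point
    {n N : ℕ}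
    (k : EuclideanSpace ℝ (Fin n) → EuclideanSpace ℝ (Fin n) → ℝ)
    (hsymm : ∀ x x', k x x' = k x' x)
    (X : Fin N → EuclideanSpace ℝ (Fin n)) (Y : Fin N → ℝ)
    (h : EuclideanSpace ℝ (Fin n)) (hnotin : h ∉ Set.range X)
    (X' : Fin (N + 1) → EuclideanSpace ℝ (Fin n)) (hX' : X' = Fin.snoc X h)
    (hXinj : Function.Injective X')
    (Kmat : Matrix (Fin N) (Fin N) ℝ) (hK : Kmat = Matrix.of fun i j => k (X i) (X j))
    (hKinv : IsUnit Kmat.det)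
    (Kmat' : Matrix (Fin (N + 1)) (Fin (N + 1)) ℝ)
    (hK' : Kmat' = Matrix.of fun i j => k (X' i) (X' j))
    (hKinv' : IsUnit Kmat'.det)
    (ybar : EuclideanSpace ℝ (Fin n) → ℝ)
    (hybar : ∀ x, ybar x = (fun i => k x (X i)) ⬝ᵥ (Kmat⁻¹ *ᵥ Y))
    (Y' : Fin (N + 1) → ℝ) (hY' : Y' = Fin.snoc Y (ybar h))
    (ybar' : EuclideanSpace ℝ (Fin n) → ℝ)
    (hybar' : ∀ x, ybar' x = (fun i => k x (X' i)) ⬝ᵥ (Kmat'⁻¹ *ᵥ Y')) :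
    ∀ x, ybar' x = ybar x :=
  gpr_mean_unchanged_by_pseudo_point_general k X Y h X' hX' Kmat hK hKinv Kmat' hK' hKinv' ybar
    hybar Y' hY' ybar' hybar'
end
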